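/- Conversely, given a DFA A over the stack-aware alphabet Σ', there exists a VDPA M over Σ such that for every well-matched word w, M accepts w if and only if A accepts T(w); moreover, M rejects every word that is not well-matched. -/

import Mathlib

inductive Kind : Type
  | call | ret | internal
deriving DecidableEq

def callCount {α : Type} (k : α → Kind) (w : List α) : ℕ :=
  w.countP (fun a => decide (k a = Kind.call))

def retCount {α : Type} (k : α → Kind) (w : List α) : ℕ :=
  w.countP (fun a => decide (k a = Kind.ret))

/-- A word is well-matched if every prefix has at least as many call symbols as
return symbols, and the total numbers of call and return symbols are equal. -/
def WellMatched {α : Type} (k : α → Kind) (w : List α) : Prop :=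
  (∀ p, p <+: w → retCount k p ≤ callCount k p) ∧ callCount k w = retCount k w

/-- The stack-aware transformation, carrying the stack of unmatched call symbols. -/
def Tgo {α : Type} (k : α → Kind) : List α → List α → List (α ⊕ α × α)
  | _, [] => []
  | st, a :: rest =>
    match k a with
    | Kind.call => Sum.inl a :: Tgo k (a :: st) rest
    | Kind.internal => Sum.inl a :: Tgo k st rest
    | Kind.ret =>
      match st with
      | [] => Sum.inl a :: Tgo k [] rest
      | c :: s => Sum.inr (a, c) :: Tgo k s rest

/-- The stack-aware transformation: each return symbol `r` is replaced by the pair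
`(r, c)` where `c` is its matching call symbol; other symbols are kept. -/
def T {α : Type} (k : α → Kind) (w : List α) : List (α ⊕ α × α) :=
  Tgo k [] w

/-- The stack of unmatched call symbols (head = top) after processing `w`. -/
def stackAfter {α : Type} (k : α → Kind) (w : List α) : List α :=
  w.foldl
    (fun st a =>
      match k a with
      | Kind.call => a :: st
      | Kind.ret => st.tail
      | Kind.internal => st) []

/-- A visibly deterministic pushdown automaton. -/
structure VDPA (α Q : Type) where
  kind : α → Kind
  δcall : Q → α → Q
  δint : Q → α → Q
  /-- return transition: state, input, popped top-of-stack symbol -/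
  δret : Q → α → α → Q
  q0 : Q
  F : Set Q

/-- One step of the VDPA on a configuration; `none` means the run has failed
(a pop from the empty stack occurred). -/
def VDPA.step {α Q : Type} (M : VDPA α Q) :
    Option (Q × List α) → α → Option (Q × List α)
  | none, _ => none
  | some (q, st), a =>
    match M.kind a with
    | Kind.call => some (M.δcall q a, a :: st)
    | Kind.internal => some (M.δint q a, st)
    | Kind.ret =>
      match st with
      | [] => none
      | c :: s => some (M.δret q a c, s)

def VDPA.run {α Q : Type} (M : VDPA α Q) (w : List α) : Option (Q × List α) :=
  w.foldl M.step (some (M.q0, []))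

/-- `M` accepts `w` iff processing succeeds and ends in an accepting state with empty stack. -/
def VDPA.Accepts {α Q : Type} (M : VDPA α Q) (w : List α) : Prop :=
  ∃ q ∈ M.F, M.run w = some (q, [])

namespace DfaToVdpaAux

variable {α Q : Type}

def stGo (k : α → Kind) (st w : List α) : List α :=
  w.foldl
    (fun st a =>
      match k a with
      | Kind.call => a :: st
      | Kind.ret => st.tail
      | Kind.internal => st) st

def mkM (k : α → Kind) (δ : Q → (α ⊕ α × α) → Q) (q0 : Q) (F : Set Q) : VDPA α Q :=
  ⟨k, fun q a => δ q (Sum.inl a), fun q a => δ q (Sum.inl a),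
   fun q a c => δ q (Sum.inr (a, c)), q0, F⟩

lemma foldl_none (k : α → Kind) (δ : Q → (α ⊕ α × α) → Q) (q0 : Q) (F : Set Q)
    (w : List α) : w.foldl (mkM k δ q0 F).step none = none := by
  induction w with
  | nil => rfl
  | cons a w ih => simpa [VDPA.step] using ih

lemma run_succ (k : α → Kind) (δ : Q → (α ⊕ α × α) → Q) (q0 : Q) (F : Set Q) :
    ∀ (w st : List α) (q : Q),
      (∀ p, p <+: w → retCount k p ≤ callCount k p + st.length) →
      w.foldl (mkM k δ q0 F).step (some (q, st)) =
        some ((Tgo k st w).foldl δ q, stGo k st w) := by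
  intro w
  induction w with
  | nil => intro st q _; rfl
  | cons a w ih =>
    intro st q h
    cases hka : k a with
    | call =>
      have h' : ∀ p, p <+: w → retCount k p ≤ callCount k p + (a :: st).length := by
        intro p hp
        obtain ⟨t, rfl⟩ := hp
        have := h (a :: p) ⟨t, rfl⟩
        simp [callCount, retCount, List.countP_cons, hka] at this ⊢
        omega
      have hstep : (mkM k δ q0 F).step (some (q, st)) a = some (δ q (Sum.inl a), a :: st) := by
        simp [VDPA.step, mkM, hka]
      rw [List.foldl_cons, hstep, ih (a :: st) _ h']
      simp [Tgo, stGo, hka]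
    | internal =>
      have h' : ∀ p, p <+: w → retCount k p ≤ callCount k p + st.length := by
        intro p hp
        obtain ⟨t, rfl⟩ := hp
        have := h (a :: p) ⟨t, rfl⟩
        simp [callCount, retCount, List.countP_cons, hka] at this ⊢
        omega
      have hstep : (mkM k δ q0 F).step (some (q, st)) a = some (δ q (Sum.inl a), st) := by
        simp [VDPA.step, mkM, hka]
      rw [List.foldl_cons, hstep, ih st _ h']
      simp [Tgo, stGo, hka]
    | ret =>
      have h1 : 1 ≤ st.length := by
        have := h [a] ⟨w, rfl⟩
        simpa [callCount, retCount, List.countP_cons, hka] using this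
      cases st with
      | nil => simp at h1
      | cons c s =>
        have h' : ∀ p, p <+: w → retCount k p ≤ callCount k p + s.length := by
          intro p hp
          obtain ⟨t, rfl⟩ := hp
          have := h (a :: p) ⟨t, rfl⟩
          simp [callCount, retCount, List.countP_cons, hka] at this ⊢
          omega
        have hstep : (mkM k δ q0 F).step (some (q, c :: s)) a = some (δ q (Sum.inr (a, c)), s) := by
          simp [VDPA.step, mkM, hka]
        rw [List.foldl_cons, hstep, ih s _ h']
        simp [Tgo, stGo, hka]

lemma stGo_length (k : α → Kind) :
    ∀ (w st : List α),
      (∀ p, p <+: w → retCount k p ≤ callCount k p + st.length) →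
      (stGo k st w).length + retCount k w = st.length + callCount k w := by
  intro w
  induction w with
  | nil => intro st _; simp [stGo, callCount, retCount]
  | cons a w ih =>
    intro st h
    cases hka : k a with
    | call =>
      have h' : ∀ p, p <+: w → retCount k p ≤ callCount k p + (a :: st).length := by
        intro p hp
        obtain ⟨t, rfl⟩ := hp
        have := h (a :: p) ⟨t, rfl⟩
        simp [callCount, retCount, List.countP_cons, hka] at this ⊢
        omega
      have := ih (a :: st) h'
      simp [stGo, hka, callCount, retCount, List.countP_cons] at this ⊢
      omega
    | internal =>
      have h' : ∀ p, p <+: w → retCount k p ≤ callCount k p + st.length := by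
        intro p hp
        obtain ⟨t, rfl⟩ := hp
        have := h (a :: p) ⟨t, rfl⟩
        simp [callCount, retCount, List.countP_cons, hka] at this ⊢
        omega
      have := ih st h'
      simp [stGo, hka, callCount, retCount, List.countP_cons] at this ⊢
      omega
    | ret =>
      have h1 : 1 ≤ st.length := by
        have := h [a] ⟨w, rfl⟩
        simpa [callCount, retCount, List.countP_cons, hka] using this
      cases st with
      | nil => simp at h1
      | cons c s =>
        have h' : ∀ p, p <+: w → retCount k p ≤ callCount k p + s.length := by
          intro p hp
          obtain ⟨t, rfl⟩ := hp
          have := h (a :: p) ⟨t, rfl⟩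
          simp [callCount, retCount, List.countP_cons, hka] at this ⊢
          omega
        have := ih s h'
        simp [stGo, hka, callCount, retCount, List.countP_cons] at this ⊢
        omega

lemma run_fail (k : α → Kind) (δ : Q → (α ⊕ α × α) → Q) (q0 : Q) (F : Set Q) :
    ∀ (w st : List α) (q : Q) (p : List α), p <+: w →
      callCount k p + st.length < retCount k p →
      w.foldl (mkM k δ q0 F).step (some (q, st)) = none := by
  intro w
  induction w with
  | nil =>
    intro st q p hp hlt
    have : p = [] := List.prefix_nil.mp hp
    subst this
    simp [callCount, retCount] at hlt
  | cons a w ih =>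
    intro st q p hp hlt
    cases p with
    | nil => simp [callCount, retCount] at hlt
    | cons b p' =>
      obtain ⟨t, ht⟩ := hp
      have hb : b = a := by injection ht
      subst hb
      have hp' : p' <+: w := ⟨t, by injection ht⟩
      cases hka : k b with
      | call =>
        have hlt' : callCount k p' + (b :: st).length < retCount k p' := by
          simp [callCount, retCount, List.countP_cons, hka] at hlt ⊢
          omega
        have hstep : (mkM k δ q0 F).step (some (q, st)) b = some (δ q (Sum.inl b), b :: st) := by
          simp [VDPA.step, mkM, hka]
        rw [List.foldl_cons, hstep]
        exact ih (b :: st) _ p' hp' hlt' 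
      | internal =>
        have hlt' : callCount k p' + st.length < retCount k p' := by
          simp [callCount, retCount, List.countP_cons, hka] at hlt ⊢
          omega
        have hstep : (mkM k δ q0 F).step (some (q, st)) b = some (δ q (Sum.inl b), st) := by
          simp [VDPA.step, mkM, hka]
        rw [List.foldl_cons, hstep]
        exact ih st _ p' hp' hlt' 
      | ret =>
        cases st with
        | nil =>
          have hstep : (mkM k δ q0 F).step (some (q, [])) b = none := by
            simp [VDPA.step, mkM, hka]
          rw [List.foldl_cons, hstep]
          exact foldl_none k δ q0 F w
        | cons c s =>
          have hlt' : callCount k p' + s.length < retCount k p' := by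
            simp [callCount, retCount, List.countP_cons, hka] at hlt ⊢
            omega
          have hstep : (mkM k δ q0 F).step (some (q, c :: s)) b = some (δ q (Sum.inr (b, c)), s) := by
            simp [VDPA.step, mkM, hka]
          rw [List.foldl_cons, hstep]
          exact ih s _ p' hp' hlt' 

end DfaToVdpaAux

/-- Conversely, from a DFA `(δ, q0, F)` over the stack-aware alphabet one obtains
a VDPA over `Σ` (with the same state set) that, on well-matched words, accepts
`w` iff the DFA accepts `T w`, and that rejects every non-well-matched word. -/

theorem dfa_to_vdpa {α Q : Type} (k : α → Kind)
    (δ : Q → (α ⊕ α × α) → Q) (q0 : Q) (F : Set Q) :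
    ∃ M : VDPA α Q, M.kind = k ∧
      (∀ w : List α, WellMatched k w →
        (M.Accepts w ↔ (T k w).foldl δ q0 ∈ F)) ∧
      (∀ w : List α, ¬WellMatched k w → ¬M.Accepts w) := by
  classical
  refine ⟨DfaToVdpaAux.mkM k δ q0 F, rfl, ?_, ?_⟩
  · intro w hw
    obtain ⟨hpre, heq⟩ := hw
    have hpre' : ∀ p, p <+: w → retCount k p ≤ callCount k p + ([] : List α).length := by
      simpa using hpre
    have hrun : (DfaToVdpaAux.mkM k δ q0 F).run w =
        some ((Tgo k [] w).foldl δ q0, DfaToVdpaAux.stGo k [] w) :=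
      DfaToVdpaAux.run_succ k δ q0 F w [] q0 hpre'
    have hlen := DfaToVdpaAux.stGo_length k w [] hpre'
    have hnil : DfaToVdpaAux.stGo k [] w = [] := by
      simp only [List.length_nil] at hlen
      have : (DfaToVdpaAux.stGo k [] w).length = 0 := by omega
      exact List.length_eq_zero_iff.mp this
    rw [hnil] at hrun
    constructor
    · rintro ⟨q, hq, hr⟩
      rw [hrun] at hr
      obtain ⟨h1, -⟩ := Prod.mk.injEq .. ▸ Option.some.inj hr
      rw [T]
      exact h1 ▸ hq
    · intro hmem
      exact ⟨(Tgo k [] w).foldl δ q0, hmem, hrun⟩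
  · intro w hw hacc
    obtain ⟨q, hq, hr⟩ := hacc
    rw [WellMatched, not_and_or] at hw
    cases hw with
    | inl h =>
      push_neg at h
      obtain ⟨p, hp, hlt⟩ := h
      have : (DfaToVdpaAux.mkM k δ q0 F).run w = none := by
        apply DfaToVdpaAux.run_fail k δ q0 F w [] q0 p hp
        simpa using hlt
      rw [this] at hr
      cases hr
    | inr h =>
      have hpre' : ∀ p, p <+: w → retCount k p ≤ callCount k p + ([] : List α).length := by
        by_contra hc
        push_neg at hc
        obtain ⟨p, hp, hlt⟩ := hc
        have : (DfaToVdpaAux.mkM k δ q0 F).run w = none := by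
          apply DfaToVdpaAux.run_fail k δ q0 F w [] q0 p hp
          omega
        rw [this] at hr
        cases hr
      have hrun : (DfaToVdpaAux.mkM k δ q0 F).run w =
          some ((Tgo k [] w).foldl δ q0, DfaToVdpaAux.stGo k [] w) :=
        DfaToVdpaAux.run_succ k δ q0 F w [] q0 hpre'
      have hlen := DfaToVdpaAux.stGo_length k w [] hpre'
      rw [hrun] at hr
      obtain ⟨-, h2⟩ := Prod.mk.injEq .. ▸ Option.some.inj hr
      rw [h2] at hlen
      simp only [List.length_nil, Nat.zero_add] at hlen
      exact h hlen.symm
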